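/- arXiv:1003.0588 — 2 statements merged into one kernel-verified Lean document; each statement's English description precedes it below -/
import Mathlib

section
/- Let T be a Turing machine such that the set of times at which cell 0 is visited is uniformly bounded on non-preperiodic configurations (for some p, every non-preperiodic x has |Φ_0(x)| ≤ p, and similarly for every cell by shift-invariance). Then the moving-head system T_H is almost equicontinuous: its equicontinuity points form a dense (indeed residual) subset of X_H. -/
/-- A Turing machine with tape alphabet `A`, state set `Q`, and rule
`δ : A × Q → A × Q × {-1,1}` (the direction is encoded by a `Bool`). -/
structure TuringMachine (A Q : Type*) where
  δ : A → Q → A × Q × Bool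

namespace TuringMachine

variable {A Q : Type*}

/-- Direction of a move: `true ↦ +1`, `false ↦ -1`. -/
def dir (b : Bool) : ℤ := if b then 1 else -1

/-- A configuration: tape contents, head state, head position. -/
abbrev Config (A Q : Type*) := (ℤ → A) × Q × ℤ

/-- One step of the machine on `X = A^ℤ × Q × ℤ`. -/
def step (M : TuringMachine A Q) (c : Config A Q) : Config A Q :=
  let r := M.δ (c.1 c.2.2) c.2.1
  (Function.update c.1 c.2.2 r.1, r.2.1, c.2.2 + dir r.2.2)

/-- Head position after `t` steps. -/
def pos (M : TuringMachine A Q) (t : ℕ) (c : Config A Q) : ℤ :=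
  ((M.step)^[t] c).2.2

/-- `c` is preperiodic for the machine. -/
def Preperiodic (M : TuringMachine A Q) (c : Config A Q) : Prop :=
  ∃ m p : ℕ, 0 < p ∧ (M.step)^[m + p] c = (M.step)^[m] c

end TuringMachine

namespace TuringMachine

variable {A Q : Type*}

/-- Alphabet of the moving-head system: a tape letter, or a tape letter marked
with the head together with its state. -/
abbrev Cell (A Q : Type*) := A ⊕ (A × Q)

/-- A cell carries the head. -/
def isHead {A Q : Type*} (b : Cell A Q) : Prop := ∃ p : A × Q, b = Sum.inr p

/-- Membership in the moving-head phase space X_H: at most one marked cell. -/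
def XHmem (x : ℤ → Cell A Q) : Prop :=
  Set.Subsingleton {i : ℤ | isHead (x i)}

/-- One step of the moving-head system T_H on (A ⊔ (A × Q))^ℤ: if there is a
head, apply the rule of the machine at the marked cell (write, change state, and
move the mark by ±1); otherwise do nothing. -/
noncomputable def hstep (M : TuringMachine A Q) (x : ℤ → Cell A Q) :
    ℤ → Cell A Q := by
  classical
  exact if h : ∃ i : ℤ, ∃ b : A, ∃ q : Q, x i = Sum.inr (b, q) then
    let i := h.choose
    let b := h.choose_spec.choose
    let q := h.choose_spec.choose_spec.choose
    let r := M.δ b q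
    let y := Function.update x i (Sum.inl r.1)
    let j := i + dir r.2.2
    Function.update y j
      (match y j with
        | Sum.inl c => Sum.inr (c, r.2.1)
        | Sum.inr (c, _) => Sum.inr (c, r.2.1))
  else x

/-- The column observed at cell 0, defining the subshift S_H. -/
noncomputable def tauH (M : TuringMachine A Q) (x : ℤ → Cell A Q) (t : ℕ) :
    Cell A Q :=
  ((M.hstep)^[t] x) 0

/-- The language of finite factors of the column subshift S_H. -/
noncomputable def langSH (M : TuringMachine A Q) : Language (Cell A Q) :=
  {w : List (Cell A Q) | ∃ x : ℤ → Cell A Q, XHmem x ∧ ∃ m : ℕ,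
    ∀ j : ℕ, ∀ hj : j < w.length, w.get ⟨j, hj⟩ = M.tauH x (m + j)}

end TuringMachine

/-!
Equicontinuity points are produced by a nested-cylinder (Baire) argument, so it suffices that
every cylinder `[w]_r` of `X_H` contains a subcylinder on whose points the orbits agree on a
given window `[-n, n]`. If the cylinder contains a configuration whose head stays in a bounded
region, a large cylinder around it fixes the whole run. Otherwise every configuration of the
cylinder is non-preperiodic, so its number of visits to `[-n, n]` is at most `(2n + 1) p`; take
one, `cs`, with the maximal number of visits. Any configuration agreeing with `cs` on a window
that contains the run of `cs` up to its last visit repeats all these visits, and by maximality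
makes no further one, so afterwards the cells of `[-n, n]` are frozen in both runs. A cylinder
in which no point carries a head consists of fixed points.
-/

open Set Function

def window (n : ℕ) : Set ℤ := {i | |i| ≤ (n : ℤ)}

lemma window_mono {m n : ℕ} (h : m ≤ n) : window m ⊆ window n :=
  fun i (hi : |i| ≤ (m : ℤ)) => show |i| ≤ (n : ℤ) from hi.trans (by exact_mod_cast h)

lemma mem_window_natAbs (i : ℤ) : i ∈ window i.natAbs :=
  (Int.abs_eq_natAbs i).le

section Refinement

variable {α : Type*}

lemma eqOn_window_of_refining {f : ℕ → ℤ → α} {r : ℕ → ℕ} (hr : Monotone r)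
    (hf : ∀ n, EqOn (f (n + 1)) (f n) (window (r n))) {n n' : ℕ} (h : n ≤ n') :
    EqOn (f n') (f n) (window (r n)) := by
  induction n', h using Nat.le_induction with
  | base => exact fun _ _ => rfl
  | succ n' h ih => exact ((hf n').mono (window_mono (hr h))).trans ih

lemma exists_eqOn_window_limit {f : ℕ → ℤ → α} {r : ℕ → ℕ} (hr : StrictMono r)
    (hf : ∀ n, EqOn (f (n + 1)) (f n) (window (r n))) :
    ∃ y : ℤ → α, ∀ n, EqOn y (f n) (window (r n)) := by
  refine ⟨fun i => f i.natAbs i, fun n i hi => ?_⟩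
  have hi' : i ∈ window (r i.natAbs) := window_mono hr.le_apply (mem_window_natAbs i)
  calc f i.natAbs i = f (max n i.natAbs) i :=
        (eqOn_window_of_refining hr.monotone hf (le_max_right _ _) hi').symm
    _ = f n i := eqOn_window_of_refining hr.monotone hf (le_max_left _ _) hi

/-- A Baire-category argument carried out by hand in the cylinder topology of `α ^ ℤ`. -/
theorem exists_eqOn_window_forall_exists_of_refine {X : Set (ℤ → α)}
    (hX : ∀ y, (∀ n, ∃ x ∈ X, EqOn x y (window n)) → y ∈ X)
    {P : ℕ → (ℤ → α) → ℕ → Prop}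
    (hP : ∀ {n m y y'}, y' ∈ X → EqOn y' y (window m) → P n y m → P n y' m)
    (hrefine : ∀ n, ∀ w ∈ X, ∀ r,
      ∃ y ∈ X, EqOn y w (window r) ∧ ∃ m, r < m ∧ P n y m)
    {x : ℤ → α} (hx : x ∈ X) (k : ℕ) :
    ∃ y ∈ X, EqOn y x (window k) ∧ ∀ n, ∃ m, P n y m := by
  have : Nonempty (ℤ → α) := ⟨x⟩
  choose! F hFX hFw R hR hFP using hrefine
  let s : ℕ → (ℤ → α) × ℕ := fun n =>
    Nat.rec (x, k) (fun n s => (F n s.1 s.2, R n s.1 s.2)) n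
  have hsX : ∀ n, (s n).1 ∈ X := fun n => by
    induction n with
    | zero => exact hx
    | succ n ih => exact hFX n _ ih _
  have hs_mono : StrictMono fun n => (s n).2 :=
    strictMono_nat_of_lt_succ fun n => hR n _ (hsX n) _
  obtain ⟨y, hy⟩ := exists_eqOn_window_limit (f := fun n => (s n).1) hs_mono
    fun n => hFw n _ (hsX n) _
  have hyX : y ∈ X := hX y fun n =>
    ⟨(s n).1, hsX n, (hy n).symm.mono (window_mono hs_mono.le_apply)⟩
  exact ⟨y, hyX, hy 0, fun n => ⟨(s (n + 1)).2, hP hyX (hy (n + 1)) (hFP n _ (hsX n) _)⟩⟩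

end Refinement

namespace TuringMachine

variable {A Q : Type*}

lemma xhmem_of_forall_eqOn_window {y : ℤ → Cell A Q}
    (h : ∀ n, ∃ x, XHmem x ∧ EqOn x y (window n)) : XHmem y := by
  intro a ha b hb
  obtain ⟨x, hx, hxy⟩ := h (max a.natAbs b.natAbs)
  have hxa := hxy (window_mono (le_max_left _ _) (mem_window_natAbs a))
  have hxb := hxy (window_mono (le_max_right _ _) (mem_window_natAbs b))
  exact hx (show isHead (x a) from hxa ▸ ha) (show isHead (x b) from hxb ▸ hb)

def encode (c : Config A Q) : ℤ → Cell A Q :=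
  fun j => if j = c.2.2 then Sum.inr (c.1 j, c.2.1) else Sum.inl (c.1 j)

lemma encode_self (c : Config A Q) : encode c c.2.2 = Sum.inr (c.1 c.2.2, c.2.1) := if_pos rfl

lemma encode_of_ne {c : Config A Q} {j : ℤ} (h : j ≠ c.2.2) : encode c j = Sum.inl (c.1 j) :=
  if_neg h

lemma letter_encode (c : Config A Q) (j : ℤ) : Sum.elim id Prod.fst (encode c j) = c.1 j := by
  unfold encode
  split_ifs <;> rfl

lemma encode_apply_congr {c c' : Config A Q} {j : ℤ} (h : c'.2 = c.2) (hj : c'.1 j = c.1 j) :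
    encode c' j = encode c j := by
  simp [encode, h, hj]

lemma isHead_encode_iff {c : Config A Q} {j : ℤ} : isHead (encode c j) ↔ j = c.2.2 := by
  unfold encode isHead
  split_ifs with h <;> simp [h]

lemma xhmem_encode (c : Config A Q) : XHmem (encode c) := fun _ ha _ hb =>
  (isHead_encode_iff.mp ha).trans (isHead_encode_iff.mp hb).symm

lemma headless_or_exists_eq_encode {x : ℤ → Cell A Q} (hx : XHmem x) :
    (∀ i, ¬ isHead (x i)) ∨ ∃ c : Config A Q, x = encode c := by
  refine or_iff_not_imp_left.mpr fun h => ?_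
  obtain ⟨i, ⟨b, q⟩, hi⟩ := not_forall_not.mp h
  refine ⟨(fun j => Sum.elim id Prod.fst (x j), q, i), funext fun j => ?_⟩
  by_cases hj : j = i
  · subst hj
    simp [encode, hi]
  · rw [encode_of_ne hj]
    rcases hxj : x j with a | bq
    · simp [hxj]
    · exact absurd (hx ⟨bq, hxj⟩ ⟨(b, q), hi⟩) hj

lemma eq_encode_of_eqOn_encode {c : Config A Q} {m : ℕ} (hc : c.2.2 ∈ window m)
    {z : ℤ → Cell A Q} (hz : XHmem z) (hzc : EqOn z (encode c) (window m)) :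
    ∃ c' : Config A Q, z = encode c' ∧ c'.2 = c.2 ∧ EqOn c'.1 c.1 (window m) := by
  have hzhead : z c.2.2 = Sum.inr (c.1 c.2.2, c.2.1) := (hzc hc).trans (encode_self c)
  rcases headless_or_exists_eq_encode hz with h | ⟨c', rfl⟩
  · exact absurd ⟨_, hzhead⟩ (h c.2.2)
  have hpos : c.2.2 = c'.2.2 := isHead_encode_iff.mp ⟨_, hzhead⟩
  have hstate : c'.2.1 = c.2.1 := by
    have := hzhead
    rw [hpos, encode_self] at this
    exact congrArg Prod.snd (Sum.inr.inj this)
  refine ⟨c', rfl, Prod.ext hstate hpos.symm, fun j hj => ?_⟩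
  simpa only [letter_encode] using congrArg (Sum.elim id Prod.fst) (hzc hj)

lemma hstep_encode (M : TuringMachine A Q) (c : Config A Q) :
    M.hstep (encode c) = encode (M.step c) := by
  classical
  have hex : ∃ i : ℤ, ∃ b : A, ∃ q : Q, encode c i = Sum.inr (b, q) :=
    ⟨_, _, _, encode_self c⟩
  unfold hstep
  rw [dif_pos hex]
  have h := hex.choose_spec.choose_spec.choose_spec
  have hi : hex.choose = c.2.2 := isHead_encode_iff.mp ⟨_, h⟩
  have hbq := Sum.inr.inj ((encode_self c).symm.trans ((congrArg (encode c) hi).symm.trans h))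
  simp only [Prod.mk.injEq] at hbq
  -- the chosen state depends on the chosen letter, which depends on the chosen cell
  simp only [← hbq.2]
  simp only [← hbq.1]
  simp only [hi]
  have hd : c.2.2 + dir (M.δ (c.1 c.2.2) c.2.1).2.2 ≠ c.2.2 := by
    unfold dir; split_ifs <;> omega
  funext l
  by_cases hl : l = c.2.2 + dir (M.δ (c.1 c.2.2) c.2.1).2.2
  · subst hl
    simp [encode, step, hd]
  · by_cases hl' : l = c.2.2
    · subst hl'
      simp [encode, step, hl]
    · simp [encode, step, hl, hl']

lemma hstep_iterate_encode (M : TuringMachine A Q) (c : Config A Q) (t : ℕ) :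
    (M.hstep)^[t] (encode c) = encode ((M.step)^[t] c) := by
  induction t with
  | zero => rfl
  | succ t ih => rw [iterate_succ_apply', ih, hstep_encode, iterate_succ_apply' M.step]

lemma hstep_iterate_of_headless (M : TuringMachine A Q) {x : ℤ → Cell A Q}
    (h : ∀ i, ¬ isHead (x i)) (t : ℕ) : (M.hstep)^[t] x = x := by
  classical
  have hfix : M.hstep x = x := by
    unfold hstep
    exact dif_neg fun ⟨i, b, q, hi⟩ => h i ⟨(b, q), hi⟩
  exact iterate_fixed hfix t

section Dynamics

variable (M : TuringMachine A Q)

lemma step_agree {d d' : Config A Q} {W : Set ℤ} (h : d'.2 = d.2) (hd : d.2.2 ∈ W)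
    (htape : EqOn d'.1 d.1 W) :
    (M.step d').2 = (M.step d).2 ∧ EqOn (M.step d').1 (M.step d).1 W := by
  obtain ⟨tape', s⟩ := d'
  obtain ⟨tape, s'⟩ := d
  obtain rfl : s = s' := h
  have hread : tape' s.2 = tape s.2 := htape hd
  refine ⟨by simp [step, hread], fun l hl => ?_⟩
  by_cases hl' : l = s.2
  · subst hl'
    simp [step, hread]
  · simpa [step, hl'] using htape hl

lemma iterate_step_agree {c c' : Config A Q} {W : Set ℤ} (h : c'.2 = c.2)
    (htape : EqOn c'.1 c.1 W) {T : ℕ} (hT : ∀ s < T, M.pos s c ∈ W) :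
    ((M.step)^[T] c').2 = ((M.step)^[T] c).2 ∧
      EqOn ((M.step)^[T] c').1 ((M.step)^[T] c).1 W := by
  induction T with
  | zero => exact ⟨h, htape⟩
  | succ T ih =>
    obtain ⟨h2, htape'⟩ := ih fun s hs => hT s (by omega)
    rw [iterate_succ_apply', iterate_succ_apply']
    exact M.step_agree h2 (hT T (by omega)) htape'

lemma tape_iterate_step_of_forall_pos_ne {c : Config A Q} {j : ℤ} {t : ℕ}
    (h : ∀ s < t, M.pos s c ≠ j) : ((M.step)^[t] c).1 j = c.1 j := by
  induction t with
  | zero => rfl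
  | succ t ih =>
    rw [iterate_succ_apply', ← ih fun s hs => h s (by omega)]
    exact update_of_ne (h t (by omega)).symm _ _

lemma pos_iterate (c : Config A Q) (s E : ℕ) : M.pos s ((M.step)^[E] c) = M.pos (s + E) c := by
  unfold pos
  rw [iterate_add_apply]

lemma encode_iterate_apply_of_forall_pos_ne {c : Config A Q} {j : ℤ} {E t : ℕ} (hEt : E ≤ t)
    (h : ∀ s, E ≤ s → M.pos s c ≠ j) :
    encode ((M.step)^[t] c) j = encode ((M.step)^[E] c) j := by
  obtain ⟨u, rfl⟩ := Nat.exists_eq_add_of_le' hEt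
  have hd : ∀ s ≤ u, M.pos s ((M.step)^[E] c) ≠ j := fun s _ => by
    rw [pos_iterate]
    exact h _ (by omega)
  have h0 : j ≠ ((M.step)^[E] c).2.2 := (hd 0 (by omega)).symm
  rw [iterate_add_apply, encode_of_ne (hd u le_rfl).symm, encode_of_ne h0,
    M.tape_iterate_step_of_forall_pos_ne fun s hs => hd s hs.le]

lemma exists_forall_le_pos_mem_window (c : Config A Q) (T : ℕ) :
    ∃ R : ℕ, ∀ s ≤ T, M.pos s c ∈ window R := by
  obtain ⟨R, hR⟩ := ((Set.finite_Iic T).image fun s => (M.pos s c).natAbs).bddAbove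
  exact ⟨R, fun s hs => window_mono (hR ⟨s, hs, rfl⟩) (mem_window_natAbs _)⟩

lemma Preperiodic.exists_forall_pos_mem_window {M : TuringMachine A Q} {c : Config A Q}
    (h : M.Preperiodic c) : ∃ R : ℕ, ∀ t, M.pos t c ∈ window R := by
  obtain ⟨m, p, hp, hmp⟩ := h
  have hper : IsPeriodicPt M.step p ((M.step)^[m] c) := by
    rw [IsPeriodicPt, IsFixedPt, ← iterate_add_apply, add_comm, hmp]
  obtain ⟨R, hR⟩ := M.exists_forall_le_pos_mem_window c (m + p)
  refine ⟨R, fun t => ?_⟩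
  rcases lt_or_ge t m with htm | hmt
  · exact hR t (by omega)
  obtain ⟨u, rfl⟩ := Nat.exists_eq_add_of_le' hmt
  have hu : M.pos (u + m) c = M.pos (u % p + m) c := by
    simp only [pos, iterate_add_apply, hper.iterate_mod_apply]
  rw [hu]
  exact hR _ (by have := Nat.mod_lt u hp; omega)

def visits (c : Config A Q) (n : ℕ) : Set ℕ := {t | M.pos t c ∈ window n}

lemma encard_visits_le {c : Config A Q} {p : ℕ}
    (hp : ∀ i, {t | M.pos t c = i}.encard ≤ p) (n : ℕ) :
    (M.visits c n).encard ≤ (2 * n + 1) * p := by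
  have hsub : M.visits c n ⊆ ⋃ i ∈ Finset.Icc (-(n : ℤ)) n, {t | M.pos t c = i} :=
    fun t ht => mem_biUnion (Finset.mem_Icc.mpr (abs_le.mp ht)) rfl
  calc (M.visits c n).encard
      ≤ ∑ i ∈ Finset.Icc (-(n : ℤ)) n, {t | M.pos t c = i}.encard :=
        (encard_le_encard hsub).trans (Finset.set_encard_biUnion_le _ _)
    _ ≤ ∑ _i ∈ Finset.Icc (-(n : ℤ)) n, (p : ℕ∞) := Finset.sum_le_sum fun i _ => hp i
    _ = (2 * n + 1) * p := by
        rw [Finset.sum_const, nsmul_eq_mul, Int.card_Icc]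
        norm_cast
        congr
        omega

end Dynamics

section Blocking

variable (M : TuringMachine A Q)

/-- `y` is an equicontinuity point of `T_H` iff `∀ n, ∃ m, M.Blocks y m n`. -/
def Blocks (y : ℤ → Cell A Q) (m n : ℕ) : Prop :=
  ∀ z, XHmem z → EqOn z y (window m) →
    ∀ t, EqOn ((M.hstep)^[t] z) ((M.hstep)^[t] y) (window n)

variable {M}

lemma Blocks.mono {y : ℤ → Cell A Q} {m m' n : ℕ} (h : M.Blocks y m n) (hm : m ≤ m') :
    M.Blocks y m' n :=
  fun z hz hzy => h z hz (hzy.mono (window_mono hm))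

lemma Blocks.of_eqOn {y y' : ℤ → Cell A Q} {m n : ℕ} (hy' : XHmem y')
    (hyy' : EqOn y' y (window m)) (h : M.Blocks y m n) : M.Blocks y' m n :=
  fun z hz hzy' t => (h z hz (hzy'.trans hyy') t).trans (h y' hy' hyy' t).symm

lemma blocks_of_forall_headless {w : ℤ → Cell A Q} {r : ℕ} (hw : XHmem w)
    (h : ∀ z, XHmem z → EqOn z w (window r) → ∀ i, ¬ isHead (z i)) (n : ℕ) :
    M.Blocks w (max r n) n := by
  intro z hz hzw t
  have hzw' := hzw.mono (window_mono (le_max_left r n))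
  rw [M.hstep_iterate_of_headless (h z hz hzw') t,
    M.hstep_iterate_of_headless (h w hw fun _ _ => rfl) t]
  exact hzw.mono (window_mono (le_max_right r n))

lemma blocks_encode {c : Config A Q} {m n : ℕ} (hc : c.2.2 ∈ window m)
    (h : ∀ c' : Config A Q, c'.2 = c.2 → EqOn c'.1 c.1 (window m) → ∀ t,
      EqOn (encode ((M.step)^[t] c')) (encode ((M.step)^[t] c)) (window n)) :
    M.Blocks (encode c) m n := by
  intro z hz hzc t
  obtain ⟨c', rfl, h2, htape⟩ := eq_encode_of_eqOn_encode hc hz hzc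
  simpa only [hstep_iterate_encode] using h c' h2 htape t

lemma blocks_encode_of_forall_pos_mem_window {c : Config A Q} {R : ℕ}
    (hR : ∀ t, M.pos t c ∈ window R) (n : ℕ) : M.Blocks (encode c) (max R n) n := by
  have hRm := window_mono (le_max_left R n)
  refine blocks_encode (hRm (hR 0)) fun c' h2 htape t j hj => ?_
  obtain ⟨h2t, htapet⟩ := M.iterate_step_agree h2 htape (T := t) fun s _ => hRm (hR s)
  exact encode_apply_congr h2t (htapet (window_mono (le_max_right R n) hj))

lemma encode_iterate_eqOn_of_agree_of_not_visit {c c' : Config A Q} {W : Set ℤ} {E n : ℕ}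
    (hagree : ∀ s ≤ E, ((M.step)^[s] c').2 = ((M.step)^[s] c).2 ∧
      EqOn ((M.step)^[s] c').1 ((M.step)^[s] c).1 W)
    (hnW : window n ⊆ W) (hc : ∀ s, E ≤ s → s ∉ M.visits c n)
    (hc' : ∀ s, E ≤ s → s ∉ M.visits c' n) (t : ℕ) :
    EqOn (encode ((M.step)^[t] c')) (encode ((M.step)^[t] c)) (window n) := by
  intro j hj
  have hE : ∀ s ≤ E, encode ((M.step)^[s] c') j = encode ((M.step)^[s] c) j :=
    fun s hs => encode_apply_congr (hagree s hs).1 ((hagree s hs).2 (hnW hj))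
  have hne : ∀ d, (∀ s, E ≤ s → s ∉ M.visits d n) →
      ∀ s, E ≤ s → M.pos s d ≠ j :=
    fun d hd s hs hsj => hd s hs (show M.pos s d ∈ window n from hsj ▸ hj)
  rcases le_total t E with htE | hEt
  · exact hE t htE
  · rw [M.encode_iterate_apply_of_forall_pos_ne hEt (hne c' hc'),
      M.encode_iterate_apply_of_forall_pos_ne hEt (hne c hc)]
    exact hE E le_rfl

lemma exists_blocks_encode_of_maximal_visits {cs : Config A Q} {r n : ℕ}
    (hmax : ∀ c : Config A Q, c.2 = cs.2 → EqOn c.1 cs.1 (window r) →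
      (M.visits c n).Finite ∧ (M.visits c n).ncard ≤ (M.visits cs n).ncard)
    (hunb : ∀ R : ℕ, ∃ t, M.pos t cs ∉ window R) :
    ∃ m, M.Blocks (encode cs) m n := by
  classical
  obtain ⟨hfin, -⟩ := hmax cs rfl fun _ _ => rfl
  obtain ⟨T, hT⟩ := hfin.bddAbove
  obtain ⟨R, hR⟩ := M.exists_forall_le_pos_mem_window cs T
  set m := max (max r n) R
  have hrm : window r ⊆ window m := window_mono (by omega)
  have hnm : window n ⊆ window m := window_mono (by omega)
  obtain ⟨E, hE_exit, hE_min⟩ :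
      ∃ E, M.pos E cs ∉ window m ∧ ∀ s < E, M.pos s cs ∈ window m :=
    ⟨Nat.find (hunb m), Nat.find_spec (hunb m),
      fun s hs => not_not.mp (Nat.find_min (hunb m) hs)⟩
  have hTE : T < E := lt_of_not_ge fun h => hE_exit (window_mono (le_max_right _ _) (hR _ h))
  have hcs : ∀ s, E ≤ s → s ∉ M.visits cs n := fun s hs hv => absurd (hT hv) (by omega)
  refine ⟨m, blocks_encode (hE_min 0 (by omega)) fun c' h2 htape => ?_⟩
  have hagree s (hs : s ≤ E) := M.iterate_step_agree h2 htape (T := s)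
    fun u hu => hE_min u (by omega)
  have hsub : M.visits cs n ⊆ M.visits c' n := fun s hs => by
    have hpos : M.pos s c' = M.pos s cs := congrArg Prod.snd (hagree s (by have := hT hs; omega)).1
    exact show M.pos s c' ∈ window n from hpos ▸ hs
  have hc' : ∀ s, E ≤ s → s ∉ M.visits c' n := by
    intro s hs hv
    obtain ⟨hfin', hle⟩ := hmax c' h2 (htape.mono hrm)
    have := ncard_le_ncard (insert_subset hv hsub) hfin'
    rw [ncard_insert_of_notMem (hcs s hs) hfin] at this
    omega
  exact encode_iterate_eqOn_of_agree_of_not_visit hagree hnm hcs hc'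

end Blocking

lemma exists_blocks_refinement (M : TuringMachine A Q) {p : ℕ}
    (hp : ∀ (i : ℤ) (c : Config A Q), ¬ M.Preperiodic c → {t | M.pos t c = i}.encard ≤ p)
    (n : ℕ) {w : ℤ → Cell A Q} (hw : XHmem w) (r : ℕ) :
    ∃ y, XHmem y ∧ EqOn y w (window r) ∧ ∃ m, r < m ∧ M.Blocks y m n := by
  suffices ∃ y, XHmem y ∧ EqOn y w (window r) ∧ ∃ m, M.Blocks y m n by
    obtain ⟨y, hy, hyw, m, hm⟩ := this
    exact ⟨y, hy, hyw, max m (r + 1), by omega, hm.mono (le_max_left _ _)⟩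
  set S := {c : Config A Q | EqOn (encode c) w (window r)}
  by_cases hbdd : ∃ c ∈ S, ∃ R, ∀ t, M.pos t c ∈ window R
  · obtain ⟨c, hc, R, hR⟩ := hbdd
    exact ⟨encode c, xhmem_encode c, hc, _, blocks_encode_of_forall_pos_mem_window hR n⟩
  push Not at hbdd
  rcases S.eq_empty_or_nonempty with hS | hS
  · refine ⟨w, hw, fun _ _ => rfl, _,
      blocks_of_forall_headless (r := r) hw (fun z hz hzw => ?_) n⟩
    rcases headless_or_exists_eq_encode hz with h | ⟨c, rfl⟩
    · exact h
    · exact absurd hzw (eq_empty_iff_forall_notMem.mp hS c)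
  have hvisits : ∀ c ∈ S, (M.visits c n).Finite ∧ (M.visits c n).ncard ≤ (2 * n + 1) * p :=
    fun c hc => encard_le_coe_iff_finite_ncard_le.mp <| by
      have hnp : ¬ M.Preperiodic c := fun hper =>
        let ⟨R, hR⟩ := hper.exists_forall_pos_mem_window
        let ⟨t, ht⟩ := hbdd c hc R
        ht (hR t)
      exact_mod_cast M.encard_visits_le (fun i => hp i c hnp) n
  obtain ⟨_, ⟨cs, hcs, rfl⟩, hmax⟩ :=
    BddAbove.exists_isGreatest_of_nonempty (S := (fun c => (M.visits c n).ncard) '' S)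
      ⟨_, forall_mem_image.mpr fun c hc => (hvisits c hc).2⟩ (hS.image _)
  have hS_of_agree : ∀ c : Config A Q, c.2 = cs.2 → EqOn c.1 cs.1 (window r) → c ∈ S :=
    fun c h2 htape j hj => (encode_apply_congr h2 (htape hj)).trans (hcs hj)
  obtain ⟨m, hm⟩ := exists_blocks_encode_of_maximal_visits
    (fun c h2 htape => ⟨(hvisits c (hS_of_agree c h2 htape)).1,
      hmax (mem_image_of_mem _ (hS_of_agree c h2 htape))⟩) (hbdd cs hcs)
  exact ⟨encode cs, xhmem_encode cs, hcs, m, hm⟩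

end TuringMachine

open TuringMachine in
theorem almost_equicontinuous_of_uniformly_bounded_visits_general
    {A Q : Type*}
    (M : TuringMachine A Q)
    (hvis : ∃ p : ℕ, ∀ (i : ℤ) (x : TuringMachine.Config A Q),
      ¬ M.Preperiodic x →
      Set.encard {t : ℕ | M.pos t x = i} ≤ (p : ℕ∞)) :
    ∀ x : ℤ → TuringMachine.Cell A Q, TuringMachine.XHmem x → ∀ k : ℕ,
      ∃ y : ℤ → TuringMachine.Cell A Q, TuringMachine.XHmem y ∧
        (∀ i : ℤ, |i| ≤ (k : ℤ) → y i = x i) ∧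
        ∀ k' : ℕ, ∃ m : ℕ, ∀ z : ℤ → TuringMachine.Cell A Q,
          TuringMachine.XHmem z → (∀ i : ℤ, |i| ≤ (m : ℤ) → z i = y i) →
          ∀ t : ℕ, ∀ j : ℤ, |j| ≤ (k' : ℤ) →
            ((M.hstep)^[t] z) j = ((M.hstep)^[t] y) j := by
  obtain ⟨p, hp⟩ := hvis
  intro x hx k
  exact exists_eqOn_window_forall_exists_of_refine (X := {y | XHmem y})
    (P := fun n y m => M.Blocks y m n) (fun y hy => xhmem_of_forall_eqOn_window hy)
    (fun hy' hyy' h => h.of_eqOn hy' hyy') (fun n w hw r => M.exists_blocks_refinement hp n hw r)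
    hx k

/-- If the number of visits of the head to each fixed cell is uniformly bounded
over all non-preperiodic configurations, then the moving-head system T_H is
almost equicontinuous: its equicontinuity points are dense (every cylinder of
X_H contains an equicontinuity point). -/
theorem almost_equicontinuous_of_uniformly_bounded_visits
    {A Q : Type*} [Fintype A] [Fintype Q]
    (M : TuringMachine A Q)
    (hvis : ∃ p : ℕ, ∀ (i : ℤ) (x : TuringMachine.Config A Q),
      ¬ M.Preperiodic x →
      Set.encard {t : ℕ | M.pos t x = i} ≤ (p : ℕ∞)) :
    ∀ x : ℤ → TuringMachine.Cell A Q, TuringMachine.XHmem x → ∀ k : ℕ,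
      ∃ y : ℤ → TuringMachine.Cell A Q, TuringMachine.XHmem y ∧
        (∀ i : ℤ, |i| ≤ (k : ℤ) → y i = x i) ∧
        ∀ k' : ℕ, ∃ m : ℕ, ∀ z : ℤ → TuringMachine.Cell A Q,
          TuringMachine.XHmem z → (∀ i : ℤ, |i| ≤ (m : ℤ) → z i = y i) →
          ∀ t : ℕ, ∀ j : ℤ, |j| ≤ (k' : ℤ) →
            ((M.hstep)^[t] z) j = ((M.hstep)^[t] y) j :=
  almost_equicontinuous_of_uniformly_bounded_visits_general M hvis
end

section
/- Let T be a Turing machine whose column subshift S_H (over alphabet A ⊔ (A×Q), observing cell 0 of T_H) is sofic, recognized by a finite automaton with N states. Then T cannot make an N-cycle of width N on any configuration; in particular T is n-bounded-cycle for some n. -/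
namespace TuringMachine

/-- The machine makes an n-cycle of width N over configuration x and cell i:
there are times 0 = t_0 < t_1 < … < t_{2n} with the head at i at each even-indexed
time and outside [i-N, i+N] at each odd-indexed time. -/
def NCycle {A Q : Type*} (M : TuringMachine A Q) (n N : ℕ)
    (x : Config A Q) (i : ℤ) : Prop :=
  ∃ ts : ℕ → ℕ, ts 0 = 0 ∧ (∀ j < 2 * n, ts j < ts (j + 1)) ∧
    (∀ q ≤ n, M.pos (ts (2 * q)) x = i) ∧
    (∀ q < n, (N : ℤ) < |M.pos (ts (2 * q + 1)) x - i|)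

end TuringMachine

/-!
If the head returns to cell `0` at least every `G` steps for long enough, two of the returns see the
same state and contents of `[-G, G]`; the head is then trapped in `[-G, G]` and the column is periodic
from there on. Hence an eventually periodic column word in which the head keeps recurring is
isolated in `S_H`: any configuration realizing a long enough prefix of it has an eventually
periodic column that must coincide with it.

Given an `N`-cycle, two of its `N + 1` returns to cell `0` leave the automaton in the same state,
so pumping the column between them yields an eventually periodic word `y` of `S_H` with recurring
head. Since `y` is isolated, a second pumping argument, on `N + 1` consecutive states far out,
shows that `y` eventually has a period `d ≤ N`. But in each period the head travels to distance
more than `N` and back, so after its last visit to cell `0` before the excursion it stays away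
for more than `N` steps, which contradicts the period `d`.
-/

theorem exists_lt_map_eq_of_card_le {β : Type*} [Fintype β] (f : ℕ → β) {n : ℕ}
    (hn : Fintype.card β ≤ n) : ∃ i j, i < j ∧ j ≤ n ∧ f i = f j := by
  obtain ⟨i, j, hij, heq⟩ :=
    Fintype.exists_ne_map_eq_of_card_lt (fun i : Fin (n + 1) => f i)
      (by simpa using hn.trans_lt n.lt_succ_self)
  rcases hij.lt_or_gt with h | h
  · exact ⟨i, j, h, Fin.is_le j, heq⟩
  · exact ⟨j, i, h, Fin.is_le i, heq.symm⟩

section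

variable {α : Type*}

open Function

theorem Function.Periodic.shift_of_le {u : ℕ → α} {a b p : ℕ}
    (h : Periodic (fun s => u (a + s)) p) (hab : a ≤ b) :
    Periodic (fun s => u (b + s)) p := fun s => by
  simpa only [← add_assoc, Nat.add_sub_cancel' hab] using h (b - a + s)

theorem eq_of_periodic_of_forall_lt_eq {u v : ℕ → α} {a p : ℕ}
    (hu : Periodic (fun s => u (a + s)) p) (hv : Periodic (fun s => v (a + s)) p)
    (huv : ∀ j < a + p, u j = v j) (hp : 0 < p) : u = v := by
  funext j
  obtain hj | hj := lt_or_ge j a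
  · exact huv j (by omega)
  · obtain ⟨s, rfl⟩ := Nat.exists_eq_add_of_le hj
    rw [← hu.map_mod_nat, ← hv.map_mod_nat]
    exact huv _ (by have := Nat.mod_lt s hp; omega)

theorem apply_add_eq_of_periodic_of_periodic {u : ℕ → α} {a b p c s : ℕ}
    (hp : Periodic (fun s => u (a + s)) p) (hc : Periodic (fun s => u (b + s)) c)
    (hpos : 0 < p) (has : a ≤ s) : u (s + c) = u s := by
  have hkp : b ≤ s + b * p := by nlinarith
  have hshift : ∀ t, a ≤ t → u (t + b * p) = u t := fun t ht => by
    simpa only [← add_assoc, Nat.add_sub_cancel' ht, Nat.cast_id] using (hp.nat_mul b) (t - a)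
  calc u (s + c) = u (s + c + b * p) := (hshift _ (by omega)).symm
    _ = u (s + b * p + c) := by rw [add_right_comm]
    _ = u (s + b * p) := by
      simpa only [← add_assoc, Nat.add_sub_cancel' hkp] using hc (s + b * p - b)
    _ = u s := hshift s has

theorem exists_apply_eq_of_periodic {u : ℕ → α} {a p : ℕ}
    (hper : Periodic (fun s => u (a + s)) p) (hp : 0 < p) (j : ℕ) :
    ∃ h, j ≤ h ∧ h ≤ j + a + p ∧ u h = u a := by
  refine ⟨a + ((j - a) / p + 1) * p, ?_, ?_, by simpa using (hper.nat_mul ((j - a) / p + 1)) 0⟩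
  all_goals
    have := Nat.div_add_mod (j - a) p
    have := Nat.mod_lt (j - a) hp
    rw [add_mul, one_mul, mul_comm]
    omega

theorem exists_periodic_extension (u : ℕ → α) {a b : ℕ} (hab : a < b) :
    ∃ y : ℕ → α, (∀ j < b, y j = u j) ∧ Periodic (fun s => y (a + s)) (b - a) := by
  refine ⟨fun j => if j < a then u j else u (a + (j - a) % (b - a)), fun j hj => ?_, fun s => ?_⟩
  · dsimp only
    split_ifs with h
    · rfl
    · rw [Nat.mod_eq_of_lt (by omega), Nat.add_sub_cancel' (by omega)]
  · simp only [if_neg (Nat.not_lt.2 (Nat.le_add_right a _)), Nat.add_sub_cancel_left,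
      Nat.add_mod_right]

end

/-- Within `L`, the first `K` letters of `y` determine all the others; for the language of a
subshift this says that `y` is an isolated point of it. -/
def Language.Isolates {α : Type*} (L : Language α) (K : ℕ) (y : ℕ → α) : Prop :=
  ∀ (f : ℕ → α) (n : ℕ), (∀ j < K, f j = y j) → (List.range n).map f ∈ L → ∀ j < n, f j = y j

namespace DFA

open Function

variable {α σ : Type*} (D : DFA α σ)

theorem eval_range_add_eq {f g : ℕ → α} {a b : ℕ}
    (h : D.eval ((List.range a).map f) = D.eval ((List.range b).map g))
    (hfg : ∀ j, f (a + j) = g (b + j)) (n : ℕ) :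
    D.eval ((List.range (a + n)).map f) = D.eval ((List.range (b + n)).map g) := by
  simp only [eval, List.range_add, List.map_append, evalFrom_of_append] at h ⊢
  rw [h, List.map_map, List.map_map]
  congr 2
  exact funext hfg

theorem range_map_mem_accepts_of_periodic {y : ℕ → α} {a p : ℕ}
    (hper : Periodic (fun s => y (a + s)) p)
    (hloop : D.eval ((List.range a).map y) = D.eval ((List.range (a + p)).map y))
    (hacc : ∀ n ≤ a + p, (List.range n).map y ∈ D.accepts) (hp : 0 < p) (n : ℕ) :
    (List.range n).map y ∈ D.accepts := by
  induction n using Nat.strong_induction_on with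
  | _ n ih =>
  obtain hn | hn := le_or_gt n (a + p)
  · exact hacc n hn
  · obtain ⟨m, rfl⟩ := Nat.exists_eq_add_of_le hn.le
    have hshift : ∀ j, y (a + j) = y (a + p + j) := fun j => by
      rw [add_right_comm, add_assoc]; exact (hper j).symm
    rw [mem_accepts, ← D.eval_range_add_eq hloop hshift m]
    exact ih (a + m) (by omega)

theorem exists_periodic_of_isolates [Fintype σ] {y : ℕ → α} {K : ℕ}
    (hacc : ∀ n, (List.range n).map y ∈ D.accepts) (hiso : D.accepts.Isolates K y) :
    ∃ c, 0 < c ∧ c ≤ Fintype.card σ ∧ Periodic (fun s => y (K + Fintype.card σ + s)) c := by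
  obtain ⟨r₁, r₂, hr, hr₂, hloop⟩ := exists_lt_map_eq_of_card_le
    (fun r => D.eval ((List.range (K + r)).map y)) le_rfl
  -- `f` is `y` with the loop `y [K + r₁, K + r₂)` cut out; it is still accepted.
  obtain ⟨f, hfy, hshift⟩ : ∃ f : ℕ → α,
      (∀ j < K + r₂, f j = y j) ∧ ∀ j, f (K + r₂ + j) = y (K + r₁ + j) :=
    ⟨fun j => if j < K + r₂ then y j else y (j - (r₂ - r₁)), fun j hj => if_pos hj,
      fun j => by simp only [if_neg (by omega : ¬ K + r₂ + j < K + r₂)]; congr 1; omega⟩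
  have hfacc (n : ℕ) : (List.range (K + r₂ + n)).map f ∈ D.accepts := by
    have hstart : D.eval ((List.range (K + r₂)).map f) = D.eval ((List.range (K + r₁)).map y) := by
      rw [hloop, List.map_congr_left fun j hj => hfy j (List.mem_range.1 hj)]
    rw [mem_accepts, D.eval_range_add_eq hstart hshift n]
    exact hacc _
  refine ⟨r₂ - r₁, by omega, by omega, Periodic.shift_of_le (a := K + r₁) (fun s => ?_) (by omega)⟩
  have h := hiso f _ (fun j hj => hfy j (by omega)) (hfacc (s + 1)) (K + r₂ + s) (by omega)
  rw [hshift] at h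
  show y _ = y _
  rw [h, show K + r₁ + (s + (r₂ - r₁)) = K + r₂ + s by omega]

end DFA

namespace TuringMachine

open Function

variable {A Q : Type*}

def toCells (c : Config A Q) : ℤ → Cell A Q :=
  fun k => if k = c.2.2 then Sum.inr (c.1 k, c.2.1) else Sum.inl (c.1 k)

theorem isHead_toCells_iff {c : Config A Q} {k : ℤ} : isHead (toCells c k) ↔ k = c.2.2 := by
  unfold toCells isHead
  split_ifs with h <;> simp [h]

theorem XHmem_toCells (c : Config A Q) : XHmem (toCells c) := fun _ hi _ hj =>
  (isHead_toCells_iff.1 hi).trans (isHead_toCells_iff.1 hj).symm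

theorem eq_toCells_of_head {x : ℤ → Cell A Q} (hx : XHmem x) {i : ℤ} {b : A} {q : Q}
    (hi : x i = Sum.inr (b, q)) : x = toCells (fun k => (x k).elim id Prod.fst, q, i) := by
  funext k
  unfold toCells
  split_ifs with hk
  · subst hk; simp [hi]
  · rcases hxk : x k with a | p
    · simp [hxk]
    · exact absurd (hx ⟨p, hxk⟩ ⟨_, hi⟩) hk

theorem hstep_toCells (M : TuringMachine A Q) (c : Config A Q) :
    M.hstep (toCells c) = toCells (M.step c) := by
  have hex : ∃ i : ℤ, ∃ b : A, ∃ q : Q, toCells c i = Sum.inr (b, q) :=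
    ⟨c.2.2, c.1 c.2.2, c.2.1, if_pos rfl⟩
  have hspec := hex.choose_spec.choose_spec.choose_spec
  have hi := isHead_toCells_iff.1 ⟨_, hspec⟩
  unfold hstep
  rw [dif_pos hex]
  dsimp only
  -- the head chosen by `hstep` can only be the one of `c`
  generalize hex.choose_spec.choose_spec.choose = q at *
  generalize hex.choose_spec.choose = b at *
  generalize hex.choose = i at *
  subst hi
  rw [toCells, if_pos rfl, Sum.inr.injEq, Prod.mk.injEq] at hspec
  obtain ⟨rfl, rfl⟩ := hspec
  have hne : c.2.2 + dir (M.δ (c.1 c.2.2) c.2.1).2.2 ≠ c.2.2 := by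
    cases (M.δ (c.1 c.2.2) c.2.1).2.2 <;> simp [dir]
  funext k
  simp only [toCells, step, Function.update_apply, if_neg hne]
  split_ifs <;> first | omega | subst_vars; rfl

theorem iterate_hstep_toCells (M : TuringMachine A Q) (c : Config A Q) (t : ℕ) :
    M.hstep^[t] (toCells c) = toCells (M.step^[t] c) :=
  ((Semiconj.iterate_right (fun c => (hstep_toCells M c).symm) t) c).symm

theorem XHmem_hstep (M : TuringMachine A Q) {x : ℤ → Cell A Q} (hx : XHmem x) :
    XHmem (M.hstep x) := by
  by_cases h : ∃ i : ℤ, ∃ b : A, ∃ q : Q, x i = Sum.inr (b, q)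
  · obtain ⟨i, b, q, hi⟩ := h
    rw [eq_toCells_of_head hx hi, hstep_toCells]
    exact XHmem_toCells _
  · rwa [hstep, dif_neg h]

/-- `τ_H (toCells c)`, see `range_map_column_mem_langSH`. -/
def column (M : TuringMachine A Q) (c : Config A Q) (t : ℕ) : Cell A Q :=
  toCells (M.step^[t] c) 0

theorem isHead_column_iff {M : TuringMachine A Q} {c : Config A Q} {t : ℕ} :
    isHead (M.column c t) ↔ M.pos t c = 0 :=
  isHead_toCells_iff.trans eq_comm

theorem range_map_column_mem_langSH (M : TuringMachine A Q) (c : Config A Q) (n : ℕ) :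
    (List.range n).map (M.column c) ∈ M.langSH :=
  ⟨toCells c, XHmem_toCells c, 0, fun j _ => by
    simp [tauH, column, iterate_hstep_toCells]⟩

theorem exists_column_of_mem_langSH {M : TuringMachine A Q} {f : ℕ → Cell A Q} {n : ℕ}
    (hf : (List.range n).map f ∈ M.langSH) (hn : 0 < n) (h0 : isHead (f 0)) :
    ∃ c, ∀ j < n, f j = M.column c j := by
  obtain ⟨x, hx, m, hw⟩ := hf
  have hfz (j : ℕ) (hj : j < n) : f j = (M.hstep^[j] (M.hstep^[m] x)) 0 := by
    simpa [tauH, ← iterate_add_apply, add_comm j] using hw j (by simpa using hj)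
  obtain ⟨⟨b, q⟩, hbq⟩ := h0
  have hXz : XHmem (M.hstep^[m] x) :=
    Set.MapsTo.iterate (s := {x | XHmem x}) (fun _ => XHmem_hstep M) m hx
  have hz := eq_toCells_of_head hXz (by simpa [hfz 0 hn] using hbq)
  exact ⟨_, fun j hj => by rw [hfz j hj, hz, iterate_hstep_toCells, column]⟩

theorem abs_pos_succ_sub (M : TuringMachine A Q) (c : Config A Q) (t : ℕ) :
    |M.pos (t + 1) c - M.pos t c| = 1 := by
  rw [pos, iterate_succ_apply', step, pos, add_sub_cancel_left, dir]
  split_ifs <;> simp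

theorem abs_pos_sub_le (M : TuringMachine A Q) (c : Config A Q) {s t : ℕ} (hst : s ≤ t) :
    |M.pos t c - M.pos s c| ≤ (t - s : ℕ) := by
  induction t, hst using Nat.le_induction with
  | base => simp
  | succ t hst ih =>
    calc |M.pos (t + 1) c - M.pos s c|
        ≤ |M.pos (t + 1) c - M.pos t c| + |M.pos t c - M.pos s c| := abs_sub_le _ _ _
      _ ≤ 1 + (t - s : ℕ) := by rw [abs_pos_succ_sub]; gcongr
      _ = (t + 1 - s : ℕ) := by push_cast [Nat.sub_add_comm hst]; ring

def Agree (ρ : ℕ) (c c' : Config A Q) : Prop :=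
  c.2 = c'.2 ∧ ∀ k : ℤ, |k| ≤ ρ → c.1 k = c'.1 k

theorem Agree.step {ρ : ℕ} {c c' : Config A Q} (M : TuringMachine A Q) (h : Agree ρ c c')
    (hc : |c.2.2| ≤ ρ) : Agree ρ (M.step c) (M.step c') := by
  obtain ⟨tape, q, i⟩ := c
  obtain ⟨tape', q', i'⟩ := c'
  obtain ⟨hqp, htape⟩ := h
  obtain ⟨rfl, rfl⟩ := Prod.mk.inj hqp
  have hread : tape i = tape' i := htape i hc
  refine ⟨by simp only [TuringMachine.step, hread], fun k hk => ?_⟩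
  simp only [TuringMachine.step, hread, update_apply]
  split_ifs
  · rfl
  · exact htape k hk

theorem Agree.toCells_zero {ρ : ℕ} {c c' : Config A Q} (h : Agree ρ c c') :
    toCells c 0 = toCells c' 0 := by
  simp only [toCells, h.2 0 (by simp), ← h.1]

theorem agree_iterate_of_confined (M : TuringMachine A Q) {c : Config A Q} {ρ p : ℕ} (hp : 0 < p)
    (hag : Agree ρ c (M.step^[p] c)) (hconf : ∀ s < p, |M.pos s c| ≤ ρ) (s : ℕ) :
    Agree ρ (M.step^[s] c) (M.step^[s + p] c) ∧ |M.pos s c| ≤ ρ := by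
  induction s using Nat.strong_induction_on with
  | _ s ih =>
  have hagree : Agree ρ (M.step^[s] c) (M.step^[s + p] c) := by
    rcases s with _ | s
    · simpa using hag
    · obtain ⟨hag', hconf'⟩ := ih s s.lt_succ_self
      simpa only [iterate_succ_apply', Nat.succ_add] using hag'.step M hconf'
  refine ⟨hagree, ?_⟩
  obtain hs | hs := lt_or_ge s p
  · exact hconf s hs
  · obtain ⟨hag', hconf'⟩ := ih (s - p) (by omega)
    rw [Nat.sub_add_cancel hs] at hag'
    rwa [pos, ← hag'.1]

theorem periodic_column_of_agree (M : TuringMachine A Q) {c : Config A Q} {ρ t p : ℕ}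
    (hp : 0 < p) (hag : Agree ρ (M.step^[t] c) (M.step^[t + p] c))
    (hconf : ∀ s, t ≤ s → s < t + p → |M.pos s c| ≤ ρ) :
    Periodic (fun s => M.column c (t + s)) p := fun s => by
  have key := agree_iterate_of_confined M (c := M.step^[t] c) hp
    (by rwa [← iterate_add_apply, add_comm])
    (fun s hs => by rw [pos, ← iterate_add_apply, add_comm]; exact hconf _ (by omega) (by omega)) s
  show toCells _ 0 = toCells _ 0
  rw [show t + (s + p) = s + p + t by ring, add_comm t s, iterate_add_apply M.step (s + p),
    iterate_add_apply M.step s t]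
  exact key.1.toCells_zero.symm

/-- Pigeonhole on the views of `[-G, G]` at the visits of the head to cell `0`. -/
theorem exists_bound_periodic_column [Finite A] [Finite Q] (M : TuringMachine A Q) (G : ℕ) :
    ∃ T, ∀ c : Config A Q, (∀ s ≤ T, ∃ h, s ≤ h ∧ h ≤ s + G ∧ M.pos h c = 0) →
      ∃ t p, 0 < p ∧ t + p ≤ T ∧ Periodic (fun s => M.column c (t + s)) p := by
  cases nonempty_fintype A
  cases nonempty_fintype Q
  set R := Fintype.card ((Finset.Icc (-(G : ℤ)) G → A) × Q)
  refine ⟨R * (G + 1) + G, fun c hvisit => ?_⟩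
  choose! v hv_ge hv_le hv_pos using hvisit
  have hconf (s : ℕ) (hs : s ≤ R * (G + 1) + G) : |M.pos s c| ≤ G := by
    have h := abs_pos_sub_le M c (hv_ge s hs)
    rw [hv_pos s hs, zero_sub, abs_neg] at h
    exact h.trans (by exact_mod_cast (by have := hv_le s hs; omega : v s - s ≤ G))
  have hRT (i : ℕ) (hi : i ≤ R) : i * (G + 1) ≤ R * (G + 1) + G :=
    le_add_right (Nat.mul_le_mul_right _ hi)
  obtain ⟨i, j, hij, hjR, hview⟩ := exists_lt_map_eq_of_card_le (fun i =>
    ((fun k : Finset.Icc (-(G : ℤ)) G => (M.step^[v (i * (G + 1))] c).1 k),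
      (M.step^[v (i * (G + 1))] c).2.1)) le_rfl
  have hvij : v (i * (G + 1)) < v (j * (G + 1)) := by
    have := hv_le _ (hRT i (by omega))
    have := hv_ge _ (hRT j hjR)
    nlinarith
  have hvj : v (j * (G + 1)) ≤ R * (G + 1) + G := by
    have := hv_le _ (hRT j hjR)
    nlinarith
  refine ⟨v (i * (G + 1)), v (j * (G + 1)) - v (i * (G + 1)), Nat.sub_pos_of_lt hvij, by omega,
    periodic_column_of_agree M (ρ := G) (Nat.sub_pos_of_lt hvij) ?_
      fun s _ hs => hconf s (by omega)⟩
  rw [Nat.add_sub_cancel' hvij.le]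
  refine ⟨Prod.ext (congrArg Prod.snd hview) ?_, fun k hk =>
    congrFun (congrArg Prod.fst hview) ⟨k, Finset.mem_Icc.2 (abs_le.1 hk)⟩⟩
  exact (hv_pos _ (hRT i (by omega))).trans (hv_pos _ (hRT j hjR)).symm

theorem exists_isolates_langSH [Finite A] [Finite Q] (M : TuringMachine A Q)
    {y : ℕ → Cell A Q} {G a p : ℕ} (hp : 0 < p) (hper : Periodic (fun s => y (a + s)) p)
    (hy0 : isHead (y 0)) (hvisit : ∀ j, ∃ h, j ≤ h ∧ h ≤ j + G ∧ isHead (y h)) :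
    ∃ K, M.langSH.Isolates K y := by
  obtain ⟨T, hT⟩ := exists_bound_periodic_column M G
  set K := a + T + T * p + G + 1
  refine ⟨K, fun f n hfy hf j hj => ?_⟩
  obtain hjK | hKj := lt_or_ge j K
  · exact hfy j hjK
  obtain ⟨c, hc⟩ := exists_column_of_mem_langSH hf (by omega) (by rwa [hfy 0 (by omega)])
  have hcy (j : ℕ) (hj : j < K) : M.column c j = y j := (hc j (by omega)).symm.trans (hfy j hj)
  obtain ⟨t, q, hq, htq, hcper⟩ := hT c fun s hs => by
    obtain ⟨h, hsh, hhs, hyh⟩ := hvisit s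
    exact ⟨h, hsh, hhs, isHead_column_iff.1 (by rwa [hcy h (by omega)])⟩
  have hpq : p * q ≤ T * p := by nlinarith
  have hcol : M.column c = y :=
    eq_of_periodic_of_forall_lt_eq (a := a + T) ((hcper.nat_mul p).shift_of_le (by omega))
      (by simpa only [Nat.cast_id, mul_comm p q] using
        (hper.nat_mul q).shift_of_le (b := a + T) (by omega))
      (fun j hj => hcy j (by simp only [Nat.cast_id] at hj; omega)) (Nat.mul_pos hp hq)
  rw [hc j hj, hcol]

def translate (c : Config A Q) (i : ℤ) : Config A Q :=
  (fun k => c.1 (k + i), c.2.1, c.2.2 - i)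

theorem step_translate (M : TuringMachine A Q) (c : Config A Q) (i : ℤ) :
    M.step (translate c i) = translate (M.step c) i := by
  simp only [step, translate, sub_add_cancel, Prod.mk.injEq, true_and]
  refine ⟨funext fun k => ?_, by ring⟩
  simp only [update_apply, eq_sub_iff_add_eq]

theorem pos_translate (M : TuringMachine A Q) (c : Config A Q) (i : ℤ) (t : ℕ) :
    M.pos t (translate c i) = M.pos t c - i := by
  rw [pos, ← Semiconj.iterate_right (f := (translate · i))
    (fun c => (step_translate M c i).symm) t c]
  rfl

theorem NCycle.translate {M : TuringMachine A Q} {n N : ℕ} {x : Config A Q} {i : ℤ}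
    (h : M.NCycle n N x i) : M.NCycle n N (translate x i) 0 := by
  obtain ⟨ts, h0, hmono, heven, hodd⟩ := h
  exact ⟨ts, h0, hmono, fun q hq => by rw [pos_translate, heven q hq, sub_self],
    fun q hq => by simpa only [pos_translate, sub_zero] using hodd q hq⟩

theorem NCycle.pos_zero {M : TuringMachine A Q} {n N : ℕ} {x : Config A Q} {i : ℤ}
    (h : M.NCycle n N x i) : M.pos 0 x = i := by
  obtain ⟨ts, h0, -, heven, -⟩ := h
  simpa [h0] using heven 0 n.zero_le

/-- Pigeonhole on the `n + 1` returns of an `n`-cycle. -/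
theorem NCycle.exists_excursion {M : TuringMachine A Q} {n N : ℕ} {x : Config A Q} {i : ℤ}
    (h : M.NCycle n N x i) {β : Type*} [Fintype β] (g : ℕ → β) (hn : Fintype.card β ≤ n) :
    ∃ a m b, a < m ∧ m < b ∧ M.pos a x = i ∧ M.pos b x = i ∧ (N : ℤ) < |M.pos m x - i| ∧
      g a = g b := by
  obtain ⟨ts, -, hmono, heven, hodd⟩ := h
  have hts : StrictMonoOn ts (Set.Iic (2 * n)) := strictMonoOn_Iic_of_lt_succ hmono
  obtain ⟨q₁, q₂, hq, hq₂, hg⟩ := exists_lt_map_eq_of_card_le (fun q => g (ts (2 * q))) hn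
  refine ⟨ts (2 * q₁), ts (2 * q₁ + 1), ts (2 * q₂), ?_, ?_, heven _ (by omega), heven _ hq₂,
    hodd _ (by omega), hg⟩
  all_goals exact hts (Set.mem_Iic.2 (by omega)) (Set.mem_Iic.2 (by omega)) (by omega)

theorem exists_last_visit (M : TuringMachine A Q) (c : Config A Q) {N t m : ℕ}
    (ht : M.pos t c = 0) (htm : t ≤ m) (hm : (N : ℤ) < |M.pos m c|) :
    ∃ s, t ≤ s ∧ s + N < m ∧ M.pos s c = 0 ∧ ∀ u, s < u → u ≤ m → M.pos u c ≠ 0 := by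
  classical
  set P : ℕ → Prop := fun s => M.pos s c = 0
  set s := Nat.findGreatest P m
  have hs : M.pos s c = 0 := Nat.findGreatest_spec (P := P) htm ht
  have hsm := abs_pos_sub_le M c (Nat.findGreatest_le (P := P) m)
  rw [hs, sub_zero] at hsm
  refine ⟨s, Nat.le_findGreatest htm ht, ?_, hs,
    fun u hsu hum => Nat.findGreatest_is_greatest hsu hum⟩
  have := hm.trans_le hsm
  omega

theorem not_NCycle_of_accepts_eq_langSH [Finite A] [Finite Q] {σ : Type*} [Fintype σ]
    {M : TuringMachine A Q} {D : DFA (Cell A Q) σ} (hD : D.accepts = M.langSH)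
    (c : Config A Q) : ¬ M.NCycle (Fintype.card σ) (Fintype.card σ) c 0 := by
  intro hcyc
  obtain ⟨a, m, b, ham, hmb, ha, -, hm, hloop⟩ :=
    hcyc.exists_excursion (fun t => D.eval ((List.range t).map (M.column c))) le_rfl
  obtain ⟨y, hyc, hper⟩ := exists_periodic_extension (M.column c) (ham.trans hmb)
  have hyc' : ∀ n ≤ b, (List.range n).map y = (List.range n).map (M.column c) := fun n hn =>
    List.map_congr_left fun j hj => hyc j (by simp at hj; omega)
  have hyacc : ∀ n, (List.range n).map y ∈ D.accepts :=
    D.range_map_mem_accepts_of_periodic hper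
      (by rwa [Nat.add_sub_cancel' (by omega), hyc' a (by omega), hyc' b le_rfl])
      (fun n hn => by rw [hyc' n (by omega), hD]; exact M.range_map_column_mem_langSH c n)
      (by omega)
  have hvisit (j : ℕ) : ∃ h, j ≤ h ∧ h ≤ j + b ∧ isHead (y h) := by
    obtain ⟨h, hjh, hhj, hya⟩ := exists_apply_eq_of_periodic hper (by omega) j
    refine ⟨h, hjh, by omega, ?_⟩
    rw [hya, hyc a (by omega)]
    exact isHead_column_iff.2 ha
  obtain ⟨K, hK⟩ := M.exists_isolates_langSH (by omega) hper
    (by rw [hyc 0 (by omega)]; exact isHead_column_iff.2 hcyc.pos_zero) hvisit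
  obtain ⟨d, hd, hdN, hdper⟩ := D.exists_periodic_of_isolates hyacc (hD ▸ hK)
  obtain ⟨s, has, hsm, hs, haway⟩ := M.exists_last_visit c ha ham.le (by simpa using hm)
  have hsd := apply_add_eq_of_periodic_of_periodic hper hdper (by omega) has
  rw [hyc _ (by omega), hyc _ (by omega)] at hsd
  exact haway (s + d) (by omega) (by omega) (isHead_column_iff.1 (hsd ▸ isHead_column_iff.2 hs))

end TuringMachine

/-- If the column subshift S_H is recognized by a finite (deterministic)
automaton with N states, then the machine cannot make an N-cycle of width N on
any configuration; in particular it is n-bounded-cycle for some n. -/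
theorem no_NCycle_of_sofic_SH
    {A Q : Type*} [Fintype A] [Fintype Q]
    (M : TuringMachine A Q) (N : ℕ)
    (σ : Type*) [Fintype σ] (hcard : Fintype.card σ = N)
    (D : DFA (TuringMachine.Cell A Q) σ)
    (hacc : D.accepts = M.langSH) :
    ∀ (x : TuringMachine.Config A Q) (i : ℤ), ¬ M.NCycle N N x i := by
  intro x i hcyc
  subst hcard
  exact TuringMachine.not_NCycle_of_accepts_eq_langSH hacc _ hcyc.translate
end
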